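/- For the genus-2 AGM iteration with positive initial data a = (a₀₀,a₀₁,a₁₀,a₁₁) (a_{k+1,I} = F_I(√a_{k,00},…,√a_{k,11})), the sequence (max_I a_{k,I} − min_I a_{k,I})_k is non-increasing for k ≥ 1, and the four sequences (a_{k,I})_k converge to a common positive limit μ₂(a). -/
import Mathlib

open Filter

noncomputable def genF (g : ℕ) (I : Fin g → ZMod 2) (u : (Fin g → ZMod 2) → ℝ) : ℝ :=
  (1 / 2 ^ g) * ∑ P : Fin g → ZMod 2, u (I + P) * u P

noncomputable def genAGM (g : ℕ) (a : (Fin g → ZMod 2) → ℝ) : ℕ → (Fin g → ZMod 2) → ℝ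
  | 0 => a
  | k + 1 => fun I => genF g I (fun P => Real.sqrt (genAGM g a k P))

namespace AGMAux

abbrev ι := Fin 2 → ZMod 2

lemma card_ι : (Finset.univ : Finset ι).card = 4 := by simp [Finset.card_univ]

lemma sum_shift (I : ι) (f : ι → ℝ) : ∑ P : ι, f (I + P) = ∑ P : ι, f P :=
  Equiv.sum_comp (Equiv.addLeft I) f

lemma genF_mem (I : ι) (u : ι → ℝ) (m' M' : ℝ) (hm : 0 ≤ m')
    (h1 : ∀ P, m' ≤ u P) (h2 : ∀ P, u P ≤ M') :
    m' ^ 2 ≤ genF 2 I u ∧ genF 2 I u ≤ M' ^ 2 := by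
  have hM : 0 ≤ M' := hm.trans ((h1 default).trans (h2 default))
  have lo : ∀ P : ι, m' ^ 2 ≤ u (I + P) * u P := fun P => by
    have := mul_le_mul (h1 (I + P)) (h1 P) hm (hm.trans (h1 (I + P)))
    nlinarith [h1 (I + P), h1 P]
  have hi : ∀ P : ι, u (I + P) * u P ≤ M' ^ 2 := fun P => by
    nlinarith [h1 (I + P), h1 P, h2 (I + P), h2 P]
  constructor
  · have : (4 : ℝ) * m' ^ 2 ≤ ∑ P : ι, u (I + P) * u P := by
      calc (4 : ℝ) * m' ^ 2 = ∑ _P : ι, m' ^ 2 := by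
            rw [Finset.sum_const, card_ι]; ring
        _ ≤ _ := Finset.sum_le_sum fun P _ => lo P
    simp only [genF]
    nlinarith [this]
  · have : ∑ P : ι, u (I + P) * u P ≤ (4 : ℝ) * M' ^ 2 := by
      calc ∑ P : ι, u (I + P) * u P ≤ ∑ _P : ι, M' ^ 2 :=
            Finset.sum_le_sum fun P _ => hi P
        _ = (4 : ℝ) * M' ^ 2 := by rw [Finset.sum_const, card_ι]; ring
    simp only [genF]
    nlinarith [this]

lemma genF_zero_sub (I : ι) (u : ι → ℝ) :
    genF 2 0 u - genF 2 I u = (1 / 8) * ∑ P : ι, (u P - u (I + P)) ^ 2 := by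
  have h1 : ∑ P : ι, u (I + P) ^ 2 = ∑ P : ι, u P ^ 2 := sum_shift I (fun P => u P ^ 2)
  have expand : ∑ P : ι, (u P - u (I + P)) ^ 2
      = ∑ P : ι, u P ^ 2 + ∑ P : ι, u (I + P) ^ 2 - 2 * ∑ P : ι, u (I + P) * u P := by
    rw [← Finset.sum_add_distrib, Finset.mul_sum, ← Finset.sum_sub_distrib]
    exact Finset.sum_congr rfl fun P _ => by ring
  have h0 : genF 2 0 u = (1 / 4) * ∑ P : ι, u P ^ 2 := by
    simp only [genF]
    norm_num
    exact Finset.sum_congr rfl fun P _ => by ring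
  rw [h0, expand, h1]
  simp only [genF]
  ring

lemma genF_zero_ge (I : ι) (u : ι → ℝ) : genF 2 I u ≤ genF 2 0 u := by
  have h := genF_zero_sub I u
  have : (0 : ℝ) ≤ ∑ P : ι, (u P - u (I + P)) ^ 2 :=
    Finset.sum_nonneg fun P _ => sq_nonneg _
  linarith

lemma genF_zero_sub_le (I : ι) (u : ι → ℝ) (m' M' : ℝ)
    (h1 : ∀ P, m' ≤ u P) (h2 : ∀ P, u P ≤ M') :
    genF 2 0 u - genF 2 I u ≤ (1 / 2) * (M' - m') ^ 2 := by
  have key : ∀ P : ι, (u P - u (I + P)) ^ 2 ≤ (M' - m') ^ 2 := fun P => by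
    have a1 := h1 P; have a2 := h2 P; have a3 := h1 (I + P); have a4 := h2 (I + P)
    nlinarith
  have : ∑ P : ι, (u P - u (I + P)) ^ 2 ≤ (4 : ℝ) * (M' - m') ^ 2 := by
    calc ∑ P : ι, (u P - u (I + P)) ^ 2 ≤ ∑ _P : ι, (M' - m') ^ 2 :=
          Finset.sum_le_sum fun P _ => key P
      _ = (4 : ℝ) * (M' - m') ^ 2 := by rw [Finset.sum_const, card_ι]; ring
  rw [genF_zero_sub]
  linarith

end AGMAux

open AGMAux in
theorem stmt_18 (a : (Fin 2 → ZMod 2) → ℝ) (ha : ∀ I, 0 < a I) :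
    (∀ k : ℕ, 1 ≤ k →
      (⨆ I : Fin 2 → ZMod 2, genAGM 2 a (k + 1) I) -
        (⨅ I : Fin 2 → ZMod 2, genAGM 2 a (k + 1) I) ≤
      (⨆ I : Fin 2 → ZMod 2, genAGM 2 a k I) - (⨅ I : Fin 2 → ZMod 2, genAGM 2 a k I)) ∧
    ∃ l : ℝ, 0 < l ∧ ∀ I : Fin 2 → ZMod 2,
      Tendsto (fun k => genAGM 2 a k I) atTop (nhds l) := by
  set A : ℕ → ι → ℝ := genAGM 2 a with hA
  have hstep : ∀ k I, A (k + 1) I = genF 2 I (fun P => Real.sqrt (A k P)) := fun k I => rfl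
  -- positivity
  have hpos : ∀ k I, 0 < A k I := by
    intro k
    induction k with
    | zero => exact ha
    | succ k ih =>
      intro I
      rw [hstep]
      simp only [genF]
      have : (0 : ℝ) < ∑ P : ι, Real.sqrt (A k (I + P)) * Real.sqrt (A k P) := by
        apply Finset.sum_pos (fun P _ => mul_pos (Real.sqrt_pos.2 (ih _)) (Real.sqrt_pos.2 (ih _)))
        exact Finset.univ_nonempty
      positivity
  set m : ℕ → ℝ := fun k => ⨅ I, A k I with hm
  set M : ℕ → ℝ := fun k => ⨆ I, A k I with hM
  have hbddA : ∀ k, BddAbove (Set.range (A k)) := fun k => Set.Finite.bddAbove (Set.finite_range _)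
  have hbddB : ∀ k, BddBelow (Set.range (A k)) := fun k => Set.Finite.bddBelow (Set.finite_range _)
  have hm_le : ∀ k I, m k ≤ A k I := fun k I => ciInf_le (hbddB k) I
  have hle_M : ∀ k I, A k I ≤ M k := fun k I => le_ciSup (hbddA k) I
  have hm_pos : ∀ k, 0 < m k := by
    intro k
    obtain ⟨I, hI⟩ := exists_eq_ciInf_of_finite (f := A k)
    show 0 < ⨅ I, A k I
    rw [← hI]; exact hpos k I
  have hsqrt_lo : ∀ k P, Real.sqrt (m k) ≤ Real.sqrt (A k P) :=
    fun k P => Real.sqrt_le_sqrt (hm_le k P)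
  have hsqrt_hi : ∀ k P, Real.sqrt (A k P) ≤ Real.sqrt (M k) :=
    fun k P => Real.sqrt_le_sqrt (hle_M k P)
  have hsq_m : ∀ k, Real.sqrt (m k) ^ 2 = m k := fun k => Real.sq_sqrt (hm_pos k).le
  have hM_pos : ∀ k, 0 < M k := fun k => lt_of_lt_of_le (hpos k 0) (hle_M k 0)
  have hsq_M : ∀ k, Real.sqrt (M k) ^ 2 = M k := fun k => Real.sq_sqrt (hM_pos k).le
  have hm_mono : ∀ k, m k ≤ m (k + 1) := by
    intro k
    apply le_ciInf
    intro I
    have h := (genF_mem I (fun P => Real.sqrt (A k P)) (Real.sqrt (m k)) (Real.sqrt (M k))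
      (Real.sqrt_nonneg _) (hsqrt_lo k) (hsqrt_hi k)).1
    rw [hsq_m] at h
    rw [hstep]; exact h
  have hM_anti : ∀ k, M (k + 1) ≤ M k := by
    intro k
    apply ciSup_le
    intro I
    have h := (genF_mem I (fun P => Real.sqrt (A k P)) (Real.sqrt (m k)) (Real.sqrt (M k))
      (Real.sqrt_nonneg _) (hsqrt_lo k) (hsqrt_hi k)).2
    rw [hsq_M] at h
    rw [hstep]; exact h
  have hgap_nonneg : ∀ k, 0 ≤ M k - m k := fun k => by
    have := (hm_le k 0).trans (hle_M k 0); linarith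
  have hcontr : ∀ k, M (k + 1) - m (k + 1) ≤ (1 / 2) * (M k - m k) := by
    intro k
    have hMle : M (k + 1) ≤ A (k + 1) 0 := by
      apply ciSup_le; intro I; rw [hstep, hstep]; exact genF_zero_ge I _
    have hmge : A (k + 1) 0 - (1 / 2) * (M k - m k) ≤ m (k + 1) := by
      apply le_ciInf
      intro I
      have h := genF_zero_sub_le I (fun P => Real.sqrt (A k P)) (Real.sqrt (m k))
        (Real.sqrt (M k)) (hsqrt_lo k) (hsqrt_hi k)
      have hsq : (Real.sqrt (M k) - Real.sqrt (m k)) ^ 2 ≤ M k - m k := by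
        have h1 : Real.sqrt (m k) ≤ Real.sqrt (M k) :=
          Real.sqrt_le_sqrt ((hm_le k 0).trans (hle_M k 0))
        nlinarith [hsq_m k, hsq_M k, Real.sqrt_nonneg (m k)]
      rw [hstep k I, hstep k 0]
      linarith
    linarith
  have hgap_pow : ∀ k, M k - m k ≤ (1 / 2 : ℝ) ^ k * (M 0 - m 0) := by
    intro k
    induction k with
    | zero => simp
    | succ k ih =>
      calc M (k + 1) - m (k + 1) ≤ (1 / 2) * (M k - m k) := hcontr k
        _ ≤ (1 / 2) * ((1 / 2 : ℝ) ^ k * (M 0 - m 0)) := by linarith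
        _ = (1 / 2 : ℝ) ^ (k + 1) * (M 0 - m 0) := by ring
  have hm_monotone : Monotone m := monotone_nat_of_le_succ hm_mono
  have hM_antitone : Antitone M := antitone_nat_of_succ_le hM_anti
  have hm_bdd : BddAbove (Set.range m) := by
    refine ⟨M 0, ?_⟩
    rintro x ⟨k, rfl⟩
    exact (hm_le k 0).trans ((hle_M k 0).trans (hM_antitone (Nat.zero_le k)))
  have hm_tendsto : Tendsto m atTop (nhds (⨆ k, m k)) :=
    tendsto_atTop_ciSup hm_monotone hm_bdd
  set l := ⨆ k, m k with hl
  have hl_pos : 0 < l := lt_of_lt_of_le (hm_pos 0) (le_ciSup hm_bdd 0)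
  have hgap_tendsto : Tendsto (fun k => M k - m k) atTop (nhds 0) := by
    apply squeeze_zero hgap_nonneg hgap_pow
    have h := (tendsto_pow_atTop_nhds_zero_of_lt_one (by norm_num : (0:ℝ) ≤ 1/2)
      (by norm_num : (1/2 : ℝ) < 1)).mul_const (M 0 - m 0)
    simpa using h
  have hM_tendsto : Tendsto M atTop (nhds l) := by
    have h2 : Tendsto (fun k => (M k - m k) + m k) atTop (nhds (0 + l)) :=
      hgap_tendsto.add hm_tendsto
    simpa using h2
  refine ⟨?_, l, hl_pos, ?_⟩
  · intro k _
    have h1 := hcontr k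
    have h2 := hgap_nonneg k
    show M (k + 1) - m (k + 1) ≤ M k - m k
    linarith
  · intro I
    exact tendsto_of_tendsto_of_tendsto_of_le_of_le hm_tendsto hM_tendsto
      (fun k => hm_le k I) (fun k => hle_M k I)
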